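/- Let I = (K_n^*, s, t, c, Q) be a QSPP instance with n ≥ 4, c = 0, and q_{ef} = 0 for every pair of arcs not contained together in any s-t path. If I is linearizable, then CP_k ≤ CP_{k+1} / (n−k−1) for every k = 2, …, n−2. -/

import Mathlib

/-- An `s`-`t` path in the digraph on vertex type `V` with arc relation `A`,
represented as the list of its (distinct) vertices. -/
def IsPath {V : Type*} (A : V → V → Prop) (s t : V) (P : List V) : Prop :=
  2 ≤ P.length ∧ P.head? = some s ∧ P.getLast? = some t ∧ P.Nodup ∧ P.Chain' A

/-- The arcs traversed by a path, as the list of ordered pairs of consecutive vertices. -/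
def arcsOf {V : Type*} (P : List V) : List (V × V) :=
  P.zip P.tail

/-- Linear cost `C(P,c)` of a path. -/
noncomputable def linCost {V : Type*} (c : V × V → ℝ) (P : List V) : ℝ :=
  ((arcsOf P).map c).sum

/-- Total (quadratic) cost `C(P,c,Q)` of a path: the sum of the interaction costs over all
ordered pairs of arcs of `P` plus the sum of the linear costs of the arcs of `P`. -/
noncomputable def cost {V : Type*} (c : V × V → ℝ) (Q : V × V → V × V → ℝ)
    (P : List V) : ℝ :=
  ((arcsOf P).map fun e => ((arcsOf P).map fun f => Q e f).sum).sum + linCost c P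

/-- A QSPP instance `(G,s,t,c,Q)` is linearizable if there is a nonnegative cost vector `c'`
such that `C(P,c,Q) = C(P,c')` for every `s`-`t` path `P`. -/
def Linearizable {V : Type*} (A : V → V → Prop) (s t : V) (c : V × V → ℝ)
    (Q : V × V → V × V → ℝ) : Prop :=
  ∃ c' : V × V → ℝ, (∀ e, 0 ≤ c' e) ∧
    ∀ P, IsPath A s t P → cost c Q P = linCost c' P

/-- The arc relation of the complete symmetric digraph `K_n^*` on vertices `1,…,n`
with source `1` and target `n`, from which the incoming arcs of the source, the
outgoing arcs of the target and the arc from source to target have been removed. -/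
def knArc (n : ℕ) : ℕ → ℕ → Prop := fun i j =>
  1 ≤ i ∧ i ≤ n ∧ 1 ≤ j ∧ j ≤ n ∧ i ≠ j ∧ j ≠ 1 ∧ i ≠ n ∧ ¬(i = 1 ∧ j = n)

/-- `CP_k`: the total cost (with zero linear costs) of all `s`-`t` paths of length `k`
in `K_n^*`. -/
noncomputable def CPsum (n : ℕ) (Q : ℕ × ℕ → ℕ × ℕ → ℝ) (k : ℕ) : ℝ :=
  ∑ᶠ (P : List ℕ) (_ : IsPath (knArc n) 1 n P ∧ P.length = k + 1),
    cost (fun _ => 0) Q P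

/-!
A linearizing cost vector `c' ≥ 0` turns `CP_k` into `∑ₑ N_k(e) c'(e)`, where `N_k(e)` counts the
`s`-`t` paths with `k` arcs through the arc `e`. Any arc `(a, b)` of `K_n^*` can be subdivided by a
vertex `w ∉ {s, t, a, b}`. Subdividing the first arc of a path when `e` enters `t`, and its last
arc otherwise, never destroys `e` (the arc `(s, t)` is missing), and the pair `(P, w)` can be read
back from the new path. Each path with `k` arcs misses `n - k - 1` vertices, so
`(n - k - 1) N_k(e) ≤ N_{k+1}(e)`, and summing these against `c' ≥ 0` gives the claim.
-/

open Finset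

section Arcs

variable {V : Type*}

lemma arcsOf_cons_cons (a b : V) (l : List V) :
    arcsOf (a :: b :: l) = (a, b) :: arcsOf (b :: l) := rfl

lemma arcsOf_append : ∀ (l m : List V) (hl : l ≠ []) (hm : m ≠ []),
    arcsOf (l ++ m) = arcsOf l ++ (l.getLast hl, m.head hm) :: arcsOf m
  | [], _, hl, _ => absurd rfl hl
  | [a], m, _, hm => by
      obtain ⟨b, m, rfl⟩ := List.exists_cons_of_ne_nil hm
      rfl
  | a :: b :: l, m, _, hm => by
      simp only [List.cons_append, arcsOf_cons_cons]
      rw [← List.cons_append, arcsOf_append (b :: l) m (List.cons_ne_nil _ _) hm]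
      simp

lemma nodup_arcsOf {P : List V} (h : P.Nodup) : (arcsOf P).Nodup := by
  have hsnd : (arcsOf P).map Prod.snd = P.tail := List.map_snd_zip (by cases P <;> simp)
  exact (hsnd ▸ h.tail : ((arcsOf P).map Prod.snd).Nodup).of_map _

lemma rel_of_mem_arcsOf {A : V → V → Prop} :
    ∀ {P : List V}, P.IsChain A → ∀ e ∈ arcsOf P, A e.1 e.2
  | [], _, _, he => by simp [arcsOf] at he
  | [_], _, _, he => by simp [arcsOf] at he
  | a :: b :: l, h, e, he => by
      rw [List.isChain_cons_cons] at h
      rcases List.mem_cons.1 he with rfl | he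
      · exact h.1
      · exact rel_of_mem_arcsOf h.2 e he

lemma mem_arcsOf_append_cons {l m : List V} (hl : l ≠ []) (hm : m ≠ []) {e : V × V}
    (he : e ∈ arcsOf (l ++ m)) (hne : e ≠ (l.getLast hl, m.head hm)) (w : V) :
    e ∈ arcsOf (l ++ w :: m) := by
  obtain ⟨b, m, rfl⟩ := List.exists_cons_of_ne_nil hm
  rw [arcsOf_append l _ hl hm] at he
  rw [arcsOf_append l _ hl (List.cons_ne_nil _ _), arcsOf_cons_cons]
  simp only [List.mem_append, List.mem_cons] at he ⊢
  tauto

lemma eq_of_take_append_cons_drop_eq {i : ℕ} {P₁ P₂ : List V} {w₁ w₂ : V}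
    (h₁ : i ≤ P₁.length) (h₂ : i ≤ P₂.length)
    (h : P₁.take i ++ w₁ :: P₁.drop i = P₂.take i ++ w₂ :: P₂.drop i) : P₁ = P₂ ∧ w₁ = w₂ := by
  obtain ⟨htake, hcons⟩ := List.append_inj h (by simp [h₁, h₂])
  obtain ⟨hw, hdrop⟩ := List.cons.inj hcons
  exact ⟨by rw [← List.take_append_drop i P₁, htake, hdrop, List.take_append_drop], hw⟩

lemma IsPath.append_cons {A : V → V → Prop} {s t : V} {l m : List V}
    (hP : IsPath A s t (l ++ m)) (hl : l ≠ []) (hm : m ≠ []) {w : V} (hw : w ∉ l ++ m)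
    (hlw : A (l.getLast hl) w) (hwm : A w (m.head hm)) : IsPath A s t (l ++ w :: m) := by
  obtain ⟨hlen, hhead, hlast, hnd, hchain⟩ := hP
  refine ⟨by simp only [List.length_append, List.length_cons] at hlen ⊢; omega, ?_, ?_,
    List.nodup_middle.2 (List.nodup_cons.2 ⟨hw, hnd⟩), ?_⟩
  · rwa [List.head?_append_of_ne_nil _ hl] at hhead ⊢
  · rw [List.getLast?_append_of_ne_nil _ hm] at hlast
    rw [List.getLast?_append_of_ne_nil _ (List.cons_ne_nil _ _), List.getLast?_cons,
      hlast, Option.getD_some]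
  · rw [List.Chain', List.isChain_append] at hchain ⊢
    refine ⟨hchain.1, hchain.2.1.cons_of_ne_nil hm hwm, ?_⟩
    simp [List.getLast?_eq_getLast_of_ne_nil hl, hlw]

lemma sum_linCost_eq_sum_card_mul [DecidableEq V] (c : V × V → ℝ) {T : Finset (List V)}
    {E : Finset (V × V)} (hT : ∀ P ∈ T, (arcsOf P).Nodup ∧ ∀ e ∈ arcsOf P, e ∈ E) :
    ∑ P ∈ T, linCost c P = ∑ e ∈ E, (#{P ∈ T | e ∈ arcsOf P} : ℝ) * c e := by
  have hlin : ∀ P ∈ T, linCost c P = ∑ e ∈ E, if e ∈ arcsOf P then c e else 0 := by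
    intro P hP
    have hE : {e ∈ E | e ∈ arcsOf P} = (arcsOf P).toFinset := by
      ext e
      simpa using fun he => (hT P hP).2 e he
    rw [← sum_filter, hE, List.sum_toFinset _ (hT P hP).1]
    rfl
  rw [sum_congr rfl hlin, sum_comm]
  refine sum_congr rfl fun e _ => ?_
  rw [← sum_filter, sum_const, nsmul_eq_mul]

end Arcs

section CompleteDigraph

variable {n k : ℕ}

lemma knArc_subdivide {a b w : ℕ} (hab : knArc n a b) (hw : w ∈ Icc 1 n)
    (hw' : w ∉ [1, n, a, b]) : knArc n a w ∧ knArc n w b := by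
  simp only [knArc, mem_Icc, List.mem_cons, List.not_mem_nil, not_or] at hab hw hw' ⊢
  omega

lemma IsPath.toFinset_subset_Icc {s t : ℕ} {P : List ℕ} (hP : IsPath (knArc n) s t P) :
    P.toFinset ⊆ Icc 1 n := by
  obtain ⟨hlen, -, -, -, hchain⟩ := hP
  induction P with
  | nil => simp at hlen
  | cons a l ih =>
    obtain ⟨b, l, rfl⟩ := List.exists_cons_of_ne_nil (l := l) (by rintro rfl; simp at hlen)
    rw [List.Chain', List.isChain_cons_cons] at hchain
    have hab : knArc n a b := hchain.1
    intro x hx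
    simp only [List.toFinset_cons, mem_insert] at hx
    rcases hx with rfl | rfl | hx
    · exact mem_Icc.2 ⟨hab.1, hab.2.1⟩
    · exact mem_Icc.2 ⟨hab.2.2.1, hab.2.2.2.1⟩
    · rcases l with _ | ⟨c, l⟩
      · simp at hx
      · exact ih (by simp) hchain.2
          (List.mem_toFinset.2 (List.mem_cons_of_mem _ (List.mem_toFinset.1 hx)))

lemma finite_setOf_knPath (n m : ℕ) :
    {P : List ℕ | IsPath (knArc n) 1 n P ∧ P.length = m}.Finite := by
  refine ((List.finite_length_eq (Fin (n + 1)) m).image (List.map Fin.val)).subset ?_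
  rintro P ⟨hP, hlen⟩
  have hlt : ∀ x ∈ P, x < n + 1 := fun x hx =>
    Nat.lt_succ_of_le (mem_Icc.1 (hP.toFinset_subset_Icc (List.mem_toFinset.2 hx))).2
  exact ⟨P.pmap (fun x h => (⟨x, h⟩ : Fin (n + 1))) hlt, by simpa using hlen,
    by simp [List.map_pmap]⟩

noncomputable def knPaths (n k : ℕ) : Finset (List ℕ) :=
  (finite_setOf_knPath n (k + 1)).toFinset

@[simp]
lemma mem_knPaths {P : List ℕ} :
    P ∈ knPaths n k ↔ IsPath (knArc n) 1 n P ∧ P.length = k + 1 :=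
  Set.Finite.mem_toFinset _

lemma CPsum_eq_sum_knPaths (Q : ℕ × ℕ → ℕ × ℕ → ℝ) :
    CPsum n Q k = ∑ P ∈ knPaths n k, cost (fun _ => 0) Q P :=
  finsum_mem_eq_finite_toFinset_sum _ _

lemma one_le_of_mem_knPaths {P : List ℕ} (hP : P ∈ knPaths n k) : 1 ≤ k := by
  obtain ⟨⟨hlen2, -⟩, hlen⟩ := mem_knPaths.1 hP
  omega

lemma card_Icc_sdiff_toFinset {P : List ℕ} (hP : P ∈ knPaths n k) :
    #(Icc 1 n \ P.toFinset) = n - k - 1 := by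
  obtain ⟨hpath, hlen⟩ := mem_knPaths.1 hP
  rw [card_sdiff_of_subset hpath.toFinset_subset_Icc,
    List.toFinset_card_of_nodup hpath.2.2.2.1, Nat.card_Icc, hlen]
  omega

lemma take_append_cons_drop_mem_knPaths {P : List ℕ} (hP : P ∈ knPaths n k) {i : ℕ}
    (hi : 0 < i) (hik : i ≤ k) {w : ℕ} (hw : w ∈ Icc 1 n \ P.toFinset) :
    P.take i ++ w :: P.drop i ∈ knPaths n (k + 1) := by
  obtain ⟨hpath, hlen⟩ := mem_knPaths.1 hP
  rw [mem_sdiff, List.mem_toFinset] at hw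
  have hl : P.take i ≠ [] := List.ne_nil_of_length_pos (by simp; omega)
  have hm : P.drop i ≠ [] := List.ne_nil_of_length_pos (by simp; omega)
  rw [← List.take_append_drop i P] at hpath hw
  have hmid := rel_of_mem_arcsOf hpath.2.2.2.2 ((P.take i).getLast hl, (P.drop i).head hm) <| by
    rw [arcsOf_append _ _ hl hm]; simp
  have hw' : w ∉ [1, n, (P.take i).getLast hl, (P.drop i).head hm] := by
    intro h
    apply hw.2
    simp only [List.mem_cons, List.not_mem_nil, or_false] at h
    rcases h with rfl | rfl | rfl | rfl
    · exact List.mem_of_mem_head? hpath.2.1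
    · exact List.mem_of_mem_getLast? hpath.2.2.1
    · exact List.mem_append_left _ (List.getLast_mem hl)
    · exact List.mem_append_right _ (List.head_mem hm)
  obtain ⟨hlw, hwm⟩ := knArc_subdivide hmid hw.1 hw'
  refine mem_knPaths.2 ⟨hpath.append_cons hl hm hw.2 hlw hwm, ?_⟩
  simp only [List.length_append, List.length_cons, List.length_take, List.length_drop, hlen]
  omega

lemma mem_arcsOf_take_one_append_cons_drop {P : List ℕ} (hP : P ∈ knPaths n k)
    {e : ℕ × ℕ} (he : e ∈ arcsOf P) (he2 : e.2 = n) (w : ℕ) :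
    e ∈ arcsOf (P.take 1 ++ w :: P.drop 1) := by
  obtain ⟨hpath, hlen⟩ := mem_knPaths.1 hP
  have hl : P.take 1 = [1] := by rw [List.take_one, hpath.2.1]; rfl
  have hm : P.drop 1 ≠ [] :=
    List.ne_nil_of_length_pos (by have := one_le_of_mem_knPaths hP; simp; omega)
  refine mem_arcsOf_append_cons (by simp [hl]) hm (by rwa [List.take_append_drop]) ?_ w
  rintro rfl
  have := rel_of_mem_arcsOf hpath.2.2.2.2 _ he
  simp only [hl, List.getLast_singleton] at this he2
  exact this.2.2.2.2.2.2.2 ⟨rfl, he2⟩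

lemma mem_arcsOf_take_append_cons_drop {P : List ℕ} (hP : P ∈ knPaths n k)
    {e : ℕ × ℕ} (he : e ∈ arcsOf P) (he2 : e.2 ≠ n) (w : ℕ) :
    e ∈ arcsOf (P.take k ++ w :: P.drop k) := by
  obtain ⟨hpath, hlen⟩ := mem_knPaths.1 hP
  have hP0 : P ≠ [] := by rintro rfl; simp at hlen
  have hm : P.drop k = [n] := by
    rw [show k = P.length - 1 by omega, List.drop_length_sub_one hP0]
    simpa [List.getLast?_eq_some_getLast hP0] using hpath.2.2.1
  have hl : P.take k ≠ [] :=
    List.ne_nil_of_length_pos (by have := one_le_of_mem_knPaths hP; simp; omega)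
  refine mem_arcsOf_append_cons hl (by simp [hm]) (by rwa [List.take_append_drop]) ?_ w
  rintro rfl
  simp [hm] at he2

theorem card_filter_mem_arcsOf_knPaths_le (n k : ℕ) (e : ℕ × ℕ) :
    (n - k - 1) * #{P ∈ knPaths n k | e ∈ arcsOf P} ≤
      #{P ∈ knPaths n (k + 1) | e ∈ arcsOf P} := by
  set F := {P ∈ knPaths n k | e ∈ arcsOf P}
  set i := if e.2 = n then 1 else k
  have hF : ∀ P ∈ F, P ∈ knPaths n k ∧ e ∈ arcsOf P := fun P hP => mem_filter.1 hP
  have hik : i ≤ k + 1 := by simp only [i]; split_ifs <;> omega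
  calc (n - k - 1) * #F = #(F.sigma fun P => Icc 1 n \ P.toFinset) := by
        rw [card_sigma, sum_congr rfl fun P hP => card_Icc_sdiff_toFinset (hF P hP).1,
          sum_const, smul_eq_mul, mul_comm]
    _ ≤ _ := by
      refine card_le_card_of_injOn (fun x => x.1.take i ++ x.2 :: x.1.drop i) ?_ ?_
      · rintro ⟨P, w⟩ hx
        obtain ⟨hP, hw⟩ := mem_sigma.1 hx
        obtain ⟨hPk, he⟩ := hF P hP
        have hi : 0 < i ∧ i ≤ k := by
          have := one_le_of_mem_knPaths hPk
          simp only [i]; split_ifs <;> omega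
        refine mem_filter.2 ⟨take_append_cons_drop_mem_knPaths hPk hi.1 hi.2 hw, ?_⟩
        simp only [i]
        split_ifs with he2
        · exact mem_arcsOf_take_one_append_cons_drop hPk he he2 w
        · exact mem_arcsOf_take_append_cons_drop hPk he he2 w
      · rintro ⟨P₁, w₁⟩ hx₁ ⟨P₂, w₂⟩ hx₂ h
        have hlen : ∀ P ∈ F, i ≤ P.length := fun P hP =>
          (mem_knPaths.1 (hF P hP).1).2 ▸ hik
        obtain ⟨rfl, rfl⟩ := eq_of_take_append_cons_drop_eq
          (hlen _ (mem_sigma.1 hx₁).1) (hlen _ (mem_sigma.1 hx₂).1) h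
        rfl

theorem sum_linCost_knPaths_le {c : ℕ × ℕ → ℝ} (hc : ∀ e, 0 ≤ c e) (n k : ℕ) :
    ((n - k - 1 : ℕ) : ℝ) * ∑ P ∈ knPaths n k, linCost c P ≤
      ∑ P ∈ knPaths n (k + 1), linCost c P := by
  have hT : ∀ m, ∀ P ∈ knPaths n m,
      (arcsOf P).Nodup ∧ ∀ e ∈ arcsOf P, e ∈ Icc 1 n ×ˢ Icc 1 n := by
    intro m P hP
    obtain ⟨hpath, -⟩ := mem_knPaths.1 hP
    refine ⟨nodup_arcsOf hpath.2.2.2.1, fun e he => ?_⟩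
    have := rel_of_mem_arcsOf hpath.2.2.2.2 e he
    simp only [knArc] at this
    simp only [mem_product, mem_Icc]
    omega
  rw [sum_linCost_eq_sum_card_mul c (hT k), sum_linCost_eq_sum_card_mul c (hT (k + 1)),
    mul_sum]
  refine sum_le_sum fun e _ => ?_
  rw [← mul_assoc]
  exact mul_le_mul_of_nonneg_right (by exact_mod_cast card_filter_mem_arcsOf_knPaths_le n k e)
    (hc e)

end CompleteDigraph

theorem stmt_10_general (n : ℕ) (Q : ℕ × ℕ → ℕ × ℕ → ℝ)
    (hlin : Linearizable (knArc n) 1 n (fun _ => 0) Q) :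
    ∀ k, 2 ≤ k → k ≤ n - 2 →
      CPsum n Q k ≤ CPsum n Q (k + 1) / ((n : ℝ) - k - 1) := by
  obtain ⟨c, hc, hcost⟩ := hlin
  intro k hk hkn
  have hCP : ∀ m, CPsum n Q m = ∑ P ∈ knPaths n m, linCost c P := fun m => by
    rw [CPsum_eq_sum_knPaths]
    exact sum_congr rfl fun P hP => hcost P (mem_knPaths.1 hP).1
  have hcast : ((n - k - 1 : ℕ) : ℝ) = n - k - 1 := by
    rw [Nat.sub_sub, Nat.cast_sub (by omega)]
    push_cast
    ring
  have hpos : (0 : ℝ) < n - k - 1 := by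
    rw [← hcast]
    exact_mod_cast (by omega : 0 < n - k - 1)
  rw [le_div_iff₀ hpos, hCP, hCP, mul_comm, ← hcast]
  exact sum_linCost_knPaths_le hc n k

/-- On `K_n^*` (`n ≥ 4`): if the instance is linearizable then
`CP_k ≤ CP_{k+1} / (n-k-1)` for every `k = 2,…,n-2`. -/
theorem stmt_10 (n : ℕ) (hn : 4 ≤ n) (Q : ℕ × ℕ → ℕ × ℕ → ℝ)
    (hQ0 : ∀ e f, 0 ≤ Q e f) (hQs : ∀ e f, Q e f = Q f e) (hQd : ∀ e, Q e e = 0)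
    (hQpath : ∀ e f,
      (¬ ∃ P, IsPath (knArc n) 1 n P ∧ e ∈ arcsOf P ∧ f ∈ arcsOf P) → Q e f = 0)
    (hlin : Linearizable (knArc n) 1 n (fun _ => 0) Q) :
    ∀ k, 2 ≤ k → k ≤ n - 2 →
      CPsum n Q k ≤ CPsum n Q (k + 1) / ((n : ℝ) - k - 1) :=
  stmt_10_general n Q hlin
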